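/- For every integer M ≥ 3 and every n ∈ ℤ, the ratio (f_M(n+1) − f_M(n))² / (f_M(n+1) + f_M(n)) (interpreted as 0 when the denominator is 0, with the difference and ratio taken in ℝ) is at most (M − 1)! · (N_K + 1)^{M−3}. -/

import Mathlib

/-!
Write `D_M(n) = f_M(n+1) - f_M(n)` and `S_M(n) = f_M(n+1) + f_M(n)`. Since
`f_{M+1}(n) = ∑_{k=0}^{N} f_M(n-k)`, both `D_{M+1}` and `S_{M+1}` are window sums of `D_M` and
`S_M`, so Cauchy–Schwarz turns `D_M² ≤ C·S_M` into `D_{M+1}² ≤ (N+1)·C·S_{M+1}`.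
For the base case `M = 3`, `D_3(n) = x - y` with `x = f_2(n+1)`, `y = f_2(n-N)`; as `f_2` changes
by at most one per step, the window sums `f_3(n+1)` and `f_3(n)` contain the triangular numbers
`x(x+1)/2` and `y(y+1)/2`, giving `D_3² ≤ 2·S_3`. Finally `2 ≤ (M-1)!`.
-/

/-- The number of `M`-tuples `(n_1, …, n_M)` with each `n_i ∈ {0, …, NK}`
and `n_1 + ⋯ + n_M = n`. -/
def f (NK M : ℕ) (n : ℤ) : ℕ :=
  (Finset.univ.filter
    (fun t : Fin M → Fin (NK + 1) => (∑ i, ((t i : ℕ) : ℤ)) = n)).card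

open Finset

section StepBounded

variable {g : ℤ → ℕ}

theorem sub_le_apply_sub_of_abs_step_le_one (hg : ∀ m, |(g (m + 1) : ℤ) - g m| ≤ 1)
    (a : ℤ) (t : ℕ) : g a - t ≤ g (a - t) := by
  induction t with
  | zero => simp
  | succ t ih =>
    have h := abs_le.1 (hg (a - (t + 1 : ℕ)))
    rw [show a - (t + 1 : ℕ) + 1 = a - t by push_cast; ring] at h
    omega

theorem mul_succ_le_two_mul_sum_sub (hg : ∀ m, |(g (m + 1) : ℤ) - g m| ≤ 1)
    (N : ℕ) (a : ℤ) (ha : g a ≤ N + 1) :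
    g a * (g a + 1) ≤ 2 * ∑ k ∈ range (N + 1), g (a - k) := by
  set c := g a
  calc c * (c + 1) = 2 * ∑ k ∈ range (c + 1), (c - k) := by
        have := sum_range_reflect (fun k => k) (c + 1)
        simp only [add_tsub_cancel_right] at this
        rw [this, mul_comm 2, sum_range_id_mul_two, add_tsub_cancel_right, mul_comm]
    _ = 2 * ∑ k ∈ range c, (c - k) := by simp [sum_range_succ]
    _ ≤ 2 * ∑ k ∈ range c, g (a - k) := by
        gcongr with k; exact sub_le_apply_sub_of_abs_step_le_one hg a k
    _ ≤ 2 * ∑ k ∈ range (N + 1), g (a - k) := by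
        gcongr

theorem mul_succ_le_two_mul_sum_add (hg : ∀ m, |(g (m + 1) : ℤ) - g m| ≤ 1)
    (N : ℕ) (a : ℤ) (ha : g a ≤ N + 1) :
    g a * (g a + 1) ≤ 2 * ∑ k ∈ range (N + 1), g (a + k) := by
  have hg' : ∀ m, |(g (-(m + 1)) : ℤ) - g (-m)| ≤ 1 := fun m => by
    simpa [abs_sub_comm, neg_add] using hg (-(m + 1))
  simpa [add_comm] using
    mul_succ_le_two_mul_sum_sub (g := fun m => g (-m)) hg' N (-a) (by simpa using ha)

end StepBounded

theorem f_succ (NK M : ℕ) (n : ℤ) :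
    f NK (M + 1) n = ∑ k ∈ range (NK + 1), f NK M (n - k) := by
  simp only [f, card_filter]
  rw [← Fin.sum_univ_eq_sum_range, ← (Fin.consEquiv _).sum_comp, Fintype.sum_prod_type]
  refine sum_congr rfl fun a _ => sum_congr rfl fun t _ => ?_
  simp [Fin.consEquiv, Fin.sum_univ_succ, eq_sub_iff_add_eq']

theorem f_one_le_one (NK : ℕ) (n : ℤ) : f NK 1 n ≤ 1 := by
  refine card_le_one.2 fun t ht s hs => funext fun i => ?_
  simp only [mem_filter, mem_univ, true_and, Fin.sum_univ_one] at ht hs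
  rw [Subsingleton.elim i 0]
  exact Fin.ext (by exact_mod_cast ht.trans hs.symm)

theorem sum_range_sub_sub_one {G : Type*} [AddCommGroup G] (u : ℤ → G) (N : ℕ) (n : ℤ) :
    ∑ k ∈ range (N + 1), (u (n - k + 1) - u (n - k)) = u (n + 1) - u (n - N) := by
  convert sum_range_sub' (fun k : ℕ => u (n + 1 - k)) (N + 1) using 3 <;> push_cast <;> ring_nf

theorem f_succ_add_one (NK M : ℕ) (n : ℤ) :
    f NK (M + 1) (n + 1) = ∑ k ∈ range (NK + 1), f NK M (n - k + 1) := by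
  rw [f_succ]
  exact sum_congr rfl fun k _ => by ring_nf

theorem f_succ_sub (NK M : ℕ) (n : ℤ) :
    (f NK (M + 1) (n + 1) : ℤ) - f NK (M + 1) n = f NK M (n + 1) - f NK M (n - NK) := by
  rw [f_succ_add_one, f_succ]
  push_cast
  rw [← sum_sub_distrib, sum_range_sub_sub_one (fun m => (f NK M m : ℤ))]

theorem abs_f_two_sub_le_one (NK : ℕ) (n : ℤ) : |(f NK 2 (n + 1) : ℤ) - f NK 2 n| ≤ 1 := by
  have h₁ := f_one_le_one NK (n + 1)
  have h₂ := f_one_le_one NK (n - NK)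
  rw [f_succ_sub, abs_le]
  omega

theorem f_two_le (NK : ℕ) (n : ℤ) : f NK 2 n ≤ NK + 1 := by
  rw [f_succ]
  calc ∑ k ∈ range (NK + 1), f NK 1 (n - k) ≤ ∑ _k ∈ range (NK + 1), 1 :=
        sum_le_sum fun k _ => f_one_le_one NK _
    _ = NK + 1 := by simp

theorem sq_f_three_sub_le (NK : ℕ) (n : ℤ) :
    ((f NK 3 (n + 1) : ℤ) - f NK 3 n) ^ 2 ≤ 2 * ((f NK 3 (n + 1) : ℤ) + f NK 3 n) := by
  have hreflect : ∑ k ∈ range (NK + 1), f NK 2 (n - NK + k) = f NK 3 n := by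
    rw [f_succ, ← sum_range_reflect]
    refine sum_congr rfl fun k hk => congrArg _ ?_
    have := mem_range.1 hk
    omega
  have hx : (f NK 2 (n + 1) * (f NK 2 (n + 1) + 1) : ℤ) ≤ 2 * f NK 3 (n + 1) := by
    exact_mod_cast f_succ NK 2 (n + 1) ▸
      mul_succ_le_two_mul_sum_sub (abs_f_two_sub_le_one NK) NK (n + 1) (f_two_le NK _)
  have hy : (f NK 2 (n - NK) * (f NK 2 (n - NK) + 1) : ℤ) ≤ 2 * f NK 3 n := by
    exact_mod_cast hreflect ▸
      mul_succ_le_two_mul_sum_add (abs_f_two_sub_le_one NK) NK (n - NK) (f_two_le NK _)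
  have hxy : (0 : ℤ) ≤ f NK 2 (n + 1) * f NK 2 (n - NK) := by positivity
  rw [f_succ_sub NK 2 n]
  -- `(x - y)² ≤ x² + y² ≤ x(x+1) + y(y+1)`
  nlinarith

theorem sq_f_succ_sub_le (NK M : ℕ) (C : ℤ)
    (h : ∀ n, ((f NK M (n + 1) : ℤ) - f NK M n) ^ 2 ≤ C * ((f NK M (n + 1) : ℤ) + f NK M n))
    (n : ℤ) :
    ((f NK (M + 1) (n + 1) : ℤ) - f NK (M + 1) n) ^ 2
      ≤ (NK + 1) * C * ((f NK (M + 1) (n + 1) : ℤ) + f NK (M + 1) n) := by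
  rw [f_succ_add_one, f_succ]
  push_cast
  rw [← sum_sub_distrib, ← sum_add_distrib, mul_assoc, mul_sum]
  calc _ ≤ (NK + 1) *
        ∑ k ∈ range (NK + 1), ((f NK M (n - k + 1) : ℤ) - f NK M (n - k)) ^ 2 := by
        simpa using sq_sum_le_card_mul_sum_sq (s := range (NK + 1))
          (f := fun k : ℕ => (f NK M (n - k + 1) : ℤ) - f NK M (n - k))
    _ ≤ _ := by gcongr with k; exact h (n - k)

theorem sq_f_sub_le (NK M : ℕ) (hM : 3 ≤ M) (n : ℤ) :
    ((f NK M (n + 1) : ℤ) - f NK M n) ^ 2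
      ≤ 2 * ((NK : ℤ) + 1) ^ (M - 3) * ((f NK M (n + 1) : ℤ) + f NK M n) := by
  induction M, hM using Nat.le_induction generalizing n with
  | base => simpa using sq_f_three_sub_le NK n
  | succ M hM ih =>
    rw [show M + 1 - 3 = M - 3 + 1 by omega]
    convert sq_f_succ_sub_le NK M _ ih n using 1
    ring

theorem stmt5_general (NK : ℕ) (M : ℕ) (hM : 3 ≤ M) (n : ℤ) :
    (if f NK M (n + 1) + f NK M n = 0 then (0 : ℝ)
      else ((f NK M (n + 1) : ℝ) - (f NK M n : ℝ)) ^ 2 /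
        ((f NK M (n + 1) : ℝ) + (f NK M n : ℝ)))
    ≤ (Nat.factorial (M - 1) : ℝ) * ((NK : ℝ) + 1) ^ (M - 3) := by
  split_ifs with h
  · positivity
  have hpos : (0 : ℝ) < f NK M (n + 1) + f NK M n := by exact_mod_cast Nat.pos_of_ne_zero h
  have hfact : (2 : ℝ) ≤ (M - 1).factorial := by
    exact_mod_cast Nat.factorial_le (show 2 ≤ M - 1 by omega)
  have hsq : ((f NK M (n + 1) : ℝ) - f NK M n) ^ 2
      ≤ 2 * ((NK : ℝ) + 1) ^ (M - 3) * (f NK M (n + 1) + f NK M n) := by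
    exact_mod_cast sq_f_sub_le NK M hM n
  rw [div_le_iff₀ hpos]
  refine hsq.trans (mul_le_mul_of_nonneg_right ?_ hpos.le)
  gcongr

/-- For `M ≥ 3`, the ratio `(f_M(n+1) − f_M(n))² / (f_M(n+1) + f_M(n))` (interpreted
as 0 when the denominator vanishes) is at most `(M − 1)! · (N_K + 1)^(M−3)`. -/
theorem stmt5 (NK : ℕ) (hNK : 0 < NK) (M : ℕ) (hM : 3 ≤ M) (n : ℤ) :
    (if f NK M (n + 1) + f NK M n = 0 then (0 : ℝ)
      else ((f NK M (n + 1) : ℝ) - (f NK M n : ℝ)) ^ 2 /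
        ((f NK M (n + 1) : ℝ) + (f NK M n : ℝ)))
    ≤ (Nat.factorial (M - 1) : ℝ) * ((NK : ℝ) + 1) ^ (M - 3) :=
  stmt5_general NK M hM n
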